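/- The infinite series (1/6) ∑_{n=1}^∞ (H_n³ − 3 H_n H_n^{(2)} + 2 H_n^{(3)}) / ((n+1)(n+2)) equals 1. -/

import Mathlib

/-- Generalized harmonic number `H_n^{(r)} = ∑_{j=1}^n 1/j^r`. -/
noncomputable def H (n r : ℕ) : ℝ := ∑ j ∈ Finset.range n, (1 : ℝ) / (j + 1) ^ r

/-- Riemann zeta value `ζ(s) = ∑_{n=1}^∞ 1/n^s` (as a real series). -/
noncomputable def Z (s : ℕ) : ℝ := ∑' n : ℕ, (1 : ℝ) / (n + 1) ^ s

/-- Double zeta value `ζ(a,b) = ∑_{m>n≥1} 1/(m^a n^b)`. -/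
noncomputable def Z2 (a b : ℕ) : ℝ :=
  ∑' m : ℕ, (∑ j ∈ Finset.range m, (1 : ℝ) / (j + 1) ^ b) / (m + 1) ^ a

lemma H_succ (n r : ℕ) : H (n + 1) r = H n r + 1 / ((n : ℝ) + 1) ^ r := by
  simp [H, Finset.sum_range_succ]

lemma H_nonneg (n r : ℕ) : 0 ≤ H n r := by
  apply Finset.sum_nonneg; intro j _; positivity

lemma H_le (n r : ℕ) (hr : 1 ≤ r) : H n r ≤ H n 1 := by
  apply Finset.sum_le_sum
  intro j _
  apply one_div_le_one_div_of_le (by positivity)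
  calc ((j : ℝ) + 1) ^ 1 ≤ ((j : ℝ) + 1) ^ r := by
        apply pow_le_pow_right₀ (by linarith [Nat.cast_nonneg (α := ℝ) j]) hr
    _ = _ := rfl

lemma one_le_H (n : ℕ) : 1 ≤ H (n + 1) 1 := by
  induction n with
  | zero => simp [H]
  | succ k ih =>
    rw [H_succ]
    push_cast
    have : (0:ℝ) < ((k:ℝ)+1+1)^1 := by positivity
    nlinarith [one_div_pos.mpr this]

lemma H_sq (n : ℕ) : H n 2 ≤ H n 1 ^ 2 := by
  induction n with
  | zero => simp [H]
  | succ k ih =>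
    rw [H_succ, H_succ]
    have hx : (0:ℝ) < (k:ℝ) + 1 := by positivity
    have h1 := H_nonneg k 1
    have : (1:ℝ) / ((k:ℝ)+1)^2 = (1/((k:ℝ)+1)^1)^2 := by
      rw [div_pow]; norm_num
    rw [this]
    nlinarith [one_div_pos.mpr (pow_pos hx 1)]

lemma P_nonneg (n : ℕ) : 0 ≤ H n 1 ^ 3 - 3 * H n 1 * H n 2 + 2 * H n 3 := by
  induction n with
  | zero => simp [H]
  | succ k ih =>
    rw [H_succ, H_succ, H_succ]
    have hx : (0:ℝ) < (k:ℝ) + 1 := by positivity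
    have h2 : (1:ℝ) / ((k:ℝ)+1)^2 = (1/((k:ℝ)+1)^1)^2 := by rw [div_pow]; norm_num
    have h3 : (1:ℝ) / ((k:ℝ)+1)^3 = (1/((k:ℝ)+1)^1)^3 := by rw [div_pow]; norm_num
    rw [h2, h3]
    have hsq := H_sq k
    have hxp : (0:ℝ) < 1/((k:ℝ)+1)^1 := by positivity
    nlinarith [mul_nonneg hxp.le (sub_nonneg.mpr hsq)]

noncomputable def F (n : ℕ) : ℝ :=
  (H (n+1) 1 ^ 3 - 3 * H (n+1) 1 * H (n+1) 2 + 2 * H (n+1) 3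
    + 3 * H (n+1) 1 ^ 2 - 3 * H (n+1) 2 + 6 * H (n+1) 1 + 6) / ((n : ℝ) + 2)

lemma telescope (n : ℕ) :
    (H (n + 1) 1 ^ 3 - 3 * H (n + 1) 1 * H (n + 1) 2 + 2 * H (n + 1) 3) /
        (((n : ℝ) + 2) * ((n : ℝ) + 3)) = F n - F (n + 1) := by
  have h1 := H_succ (n+1) 1
  have h2 := H_succ (n+1) 2
  have h3 := H_succ (n+1) 3
  simp only [F, Nat.cast_add, Nat.cast_one] at *
  rw [h1, h2, h3]
  have hn2 : ((n:ℝ) + 2) ≠ 0 := by positivity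
  have hn3 : ((n:ℝ) + 3) ≠ 0 := by positivity
  have e : ((n:ℝ) + 1 + 1) = (n:ℝ) + 2 := by ring
  rw [e]
  field_simp
  ring

lemma F0 : F 0 = 6 := by
  norm_num [F, H]

lemma F_tendsto : Filter.Tendsto F Filter.atTop (nhds 0) := by
  have key : ∀ n : ℕ, ‖F n‖ ≤ 24 * (1 + Real.log ((n:ℝ)+2)) ^ 3 / ((n:ℝ) + 2) := by
    intro n
    have hh : H (n+1) 1 ≤ 1 + Real.log ((n:ℝ)+2) := by
      have := harmonic_le_one_add_log (n+1)
      have heq : (harmonic (n+1) : ℝ) = H (n+1) 1 := by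
        simp [harmonic, H]
      rw [heq] at this
      have hlog : Real.log ((n:ℝ)+1) ≤ Real.log ((n:ℝ)+2) :=
        Real.log_le_log (by positivity) (by linarith)
      push_cast at this
      linarith
    set h := H (n+1) 1 with hdef
    have h1 : 1 ≤ h := one_le_H n
    have hb2 : H (n+1) 2 ≤ h := H_le (n+1) 2 (by norm_num)
    have hb3 : H (n+1) 3 ≤ h := H_le (n+1) 3 (by norm_num)
    have hb2' : 0 ≤ H (n+1) 2 := H_nonneg _ _
    have hb3' : 0 ≤ H (n+1) 3 := H_nonneg _ _
    have hnum : |H (n+1) 1 ^ 3 - 3 * H (n+1) 1 * H (n+1) 2 + 2 * H (n+1) 3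
      + 3 * H (n+1) 1 ^ 2 - 3 * H (n+1) 2 + 6 * H (n+1) 1 + 6| ≤ 24 * h ^ 3 := by
      rw [abs_le]
      constructor <;> nlinarith
    have hpos : (0:ℝ) < (n:ℝ) + 2 := by positivity
    rw [F, Real.norm_eq_abs, abs_div, abs_of_pos hpos, div_le_div_iff₀ hpos hpos]
    have hcube : h ^ 3 ≤ (1 + Real.log ((n:ℝ)+2)) ^ 3 := by
      apply pow_le_pow_left₀ (by linarith) hh
    nlinarith [abs_nonneg (H (n+1) 1 ^ 3 - 3 * H (n+1) 1 * H (n+1) 2 + 2 * H (n+1) 3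
      + 3 * H (n+1) 1 ^ 2 - 3 * H (n+1) 2 + 6 * H (n+1) 1 + 6)]
  apply squeeze_zero_norm key
  have hk : ∀ k : ℕ, Filter.Tendsto (fun x : ℝ => Real.log x ^ k / x) Filter.atTop (nhds 0) := by
    intro k
    have := Real.tendsto_pow_log_div_mul_add_atTop 1 0 k one_ne_zero
    simpa using this
  have h0 : Filter.Tendsto (fun x : ℝ => 24 * (1 + Real.log x) ^ 3 / x) Filter.atTop (nhds 0) := by
    have := ((((hk 3).const_mul 24).add ((hk 2).const_mul 72)).add
      ((hk 1).const_mul 72)).add ((hk 0).const_mul 24)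
    simp only [add_zero, mul_zero] at this
    apply this.congr
    intro x
    by_cases hx : x = 0
    · simp [hx]
    · field_simp
      ring
  have hcomp : Filter.Tendsto (fun n : ℕ => (n : ℝ) + 2) Filter.atTop Filter.atTop :=
    Filter.tendsto_atTop_add_const_right _ 2 tendsto_natCast_atTop_atTop
  exact h0.comp hcomp

theorem stmt4 :
    (1 / 6 : ℝ) * ∑' n : ℕ,
      (H (n + 1) 1 ^ 3 - 3 * H (n + 1) 1 * H (n + 1) 2 + 2 * H (n + 1) 3) /
        (((n : ℝ) + 2) * ((n : ℝ) + 3)) = 1 := by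
  have hsum : HasSum (fun n : ℕ =>
      (H (n + 1) 1 ^ 3 - 3 * H (n + 1) 1 * H (n + 1) 2 + 2 * H (n + 1) 3) /
        (((n : ℝ) + 2) * ((n : ℝ) + 3))) 6 := by
    rw [hasSum_iff_tendsto_nat_of_nonneg]
    · have : ∀ N : ℕ, ∑ k ∈ Finset.range N,
          (H (k + 1) 1 ^ 3 - 3 * H (k + 1) 1 * H (k + 1) 2 + 2 * H (k + 1) 3) /
            (((k : ℝ) + 2) * ((k : ℝ) + 3)) = F 0 - F N := by
        intro N
        rw [← Finset.sum_range_sub' F N]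
        exact Finset.sum_congr rfl fun k _ => telescope k
      simp only [this, F0]
      have := F_tendsto.const_sub 6
      simpa using this
    · intro n
      apply div_nonneg (P_nonneg (n+1))
      positivity
  rw [hsum.tsum_eq]
  norm_num
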